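/- arXiv:2006.07366 — 5 statements merged into one kernel-verified Lean document; each statement's English description precedes it below -/
import Mathlib

section
/- There exists a universal constant C > 0 such that for every n ≥ 1, every p ∈ [0,1], and every even integer d ≥ 2: if S and S' are independent Binomial(n,p) random variables and σ² = 2p(1−p), then E[(S − S')^d] ≤ (C·d)^{d/2} · ∑_{ℓ=1}^{d/2} (n choose ℓ) · ℓ^{d/2} · σ^{2ℓ}. -/
/-!
Let `G n d = E[(S - S')^d]` for `S, S'` independent Binomial(n, p). One more Bernoulli trial for
each variable adds to `S - S'` a step in `{-1, 0, 1}` taking the values `±1` with probability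
`p(1-p)` each, so
`G (n+1) d = G n d + p(1-p) ∑_{a<d} (1 + (-1)^(d-a)) (d choose a) G n a`.
Induction on `n` gives `G n d ≤ ∑_{l ≤ d/2} (n choose l) l^d σ^(2l)` for even `d`: the new terms
are at most `σ² ∑_{m < d/2} (n choose m) (m+1)^d σ^(2m)`, which is exactly what Pascal's rule
adds to the right-hand side. Finally `l^d ≤ d^(d/2) l^(d/2)` for `l ≤ d/2`, so `C = 1` works.
-/

open MeasureTheory ProbabilityTheory Finset

noncomputable section

variable (p : ℝ)

def binomialWeight (n j : ℕ) : ℝ := n.choose j * p ^ j * (1 - p) ^ (n - j)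

variable {p} in
lemma binomialWeight_nonneg (hp0 : 0 ≤ p) (hp1 : p ≤ 1) (n j : ℕ) :
    0 ≤ binomialWeight p n j := by
  have : 0 ≤ 1 - p := sub_nonneg.2 hp1
  unfold binomialWeight
  positivity

lemma binomialWeight_succ_zero (n : ℕ) :
    binomialWeight p (n + 1) 0 = (1 - p) * binomialWeight p n 0 := by
  simp [binomialWeight, pow_succ, mul_comm]

lemma binomialWeight_succ_succ (n j : ℕ) :
    binomialWeight p (n + 1) (j + 1)
      = p * binomialWeight p n j + (1 - p) * binomialWeight p n (j + 1) := by
  unfold binomialWeight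
  rcases lt_or_ge n (j + 1) with hn | hn
  · rw [Nat.choose_eq_zero_of_lt hn]
    obtain rfl | hn := (Nat.lt_succ_iff.1 hn).eq_or_lt
    · simp; ring
    · simp [Nat.choose_eq_zero_of_lt hn, Nat.choose_eq_zero_of_lt (by omega : n + 1 < j + 1)]
  · obtain ⟨m, rfl⟩ := Nat.exists_eq_add_of_le hn
    rw [Nat.choose_succ_succ', show j + 1 + m + 1 - (j + 1) = m + 1 by omega,
      show j + 1 + m - j = m + 1 by omega, show j + 1 + m - (j + 1) = m by omega]
    push_cast
    ring

lemma binomialWeight_succ_self (n : ℕ) : binomialWeight p n (n + 1) = 0 := by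
  simp [binomialWeight]

lemma sum_mul_binomialWeight_succ (n : ℕ) (φ : ℕ → ℝ) :
    ∑ j ∈ range (n + 2), φ j * binomialWeight p (n + 1) j
      = (1 - p) * ∑ j ∈ range (n + 1), φ j * binomialWeight p n j
        + p * ∑ j ∈ range (n + 1), φ (j + 1) * binomialWeight p n j := by
  have h := sum_range_succ' (fun j => φ j * binomialWeight p n j) (n + 1)
  rw [sum_range_succ, binomialWeight_succ_self, mul_zero, add_zero] at h
  rw [sum_range_succ', h]
  simp only [binomialWeight_succ_succ, binomialWeight_succ_zero, mul_add, mul_sum, sum_add_distrib,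
    mul_left_comm (φ _)]
  ring

lemma sum_sum_mul_binomialWeight_succ (n : ℕ) (F : ℕ → ℕ → ℝ) :
    ∑ j ∈ range (n + 2), ∑ k ∈ range (n + 2),
        F j k * binomialWeight p (n + 1) j * binomialWeight p (n + 1) k
      = ∑ j ∈ range (n + 1), ∑ k ∈ range (n + 1),
          ((1 - p) ^ 2 * F j k + p * (1 - p) * (F j (k + 1) + F (j + 1) k)
            + p ^ 2 * F (j + 1) (k + 1)) * binomialWeight p n j * binomialWeight p n k := by
  have h (m j : ℕ) (G : ℕ → ℝ) :
      ∑ k ∈ range (m + 1), G k * binomialWeight p m j * binomialWeight p m k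
        = (∑ k ∈ range (m + 1), G k * binomialWeight p m k) * binomialWeight p m j := by
    rw [sum_mul]; exact sum_congr rfl fun k _ => by ring
  simp only [h (n + 1), h n, sum_mul_binomialWeight_succ]
  simp only [mul_sum, sum_mul, mul_add, add_mul, ← sum_add_distrib]
  exact sum_congr rfl fun j _ => sum_congr rfl fun k _ => by ring

lemma add_one_pow_add_sub_one_pow {R : Type*} [CommRing R] (x : R) (d : ℕ) :
    (x + 1) ^ d + (x - 1) ^ d = ∑ a ∈ range (d + 1), (1 + (-1) ^ (d - a)) * d.choose a * x ^ a := by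
  rw [sub_eq_add_neg, add_pow, add_pow, ← sum_add_distrib]
  exact sum_congr rfl fun a _ => by ring

def symmBinomialMoment (n d : ℕ) : ℝ :=
  ∑ j ∈ range (n + 1), ∑ k ∈ range (n + 1),
    ((j : ℝ) - k) ^ d * binomialWeight p n j * binomialWeight p n k

lemma symmBinomialMoment_zero_left (d : ℕ) : symmBinomialMoment p 0 d = 0 ^ d := by
  simp [symmBinomialMoment, binomialWeight]

lemma symmBinomialMoment_succ (n d : ℕ) :
    symmBinomialMoment p (n + 1) d = ((1 - p) ^ 2 + p ^ 2) * symmBinomialMoment p n d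
      + p * (1 - p) * ∑ a ∈ range (d + 1),
          (1 + (-1) ^ (d - a)) * d.choose a * symmBinomialMoment p n a := by
  have step (j k : ℕ) : (1 - p) ^ 2 * ((j : ℝ) - k) ^ d
        + p * (1 - p) * (((j : ℝ) - ↑(k + 1)) ^ d + (↑(j + 1) - (k : ℝ)) ^ d)
        + p ^ 2 * ((↑(j + 1) : ℝ) - ↑(k + 1)) ^ d
      = ((1 - p) ^ 2 + p ^ 2) * ((j : ℝ) - k) ^ d
        + p * (1 - p) * ∑ a ∈ range (d + 1),
            (1 + (-1) ^ (d - a)) * d.choose a * ((j : ℝ) - k) ^ a := by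
    rw [← add_one_pow_add_sub_one_pow]; push_cast; ring
  rw [symmBinomialMoment, sum_sum_mul_binomialWeight_succ p n (fun j k => ((j : ℝ) - k) ^ d)]
  simp only [step, symmBinomialMoment, mul_sum]
  simp only [sum_comm (s := range (d + 1)) (t := range (n + 1)), ← sum_add_distrib]
  refine sum_congr rfl fun j _ => sum_congr rfl fun k _ => ?_
  simp only [add_mul, sum_mul]
  ring_nf

lemma sum_choose_succ_mul_pow_mul_pow (n d t : ℕ) (s : ℝ) :
    ∑ l ∈ range (t + 1), ((n + 1).choose l : ℝ) * (l : ℝ) ^ d * s ^ l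
      = ∑ l ∈ range (t + 1), (n.choose l : ℝ) * (l : ℝ) ^ d * s ^ l
        + s * ∑ m ∈ range t, (n.choose m : ℝ) * ((m : ℝ) + 1) ^ d * s ^ m := by
  simp only [sum_range_succ' _ t, Nat.choose_succ_succ', Nat.choose_zero_right]
  push_cast
  rw [mul_sum, add_right_comm, ← sum_add_distrib]
  exact congrArg (· + _) (sum_congr rfl fun m _ => by ring)

lemma sum_one_add_neg_one_pow_mul_choose_mul_pow_le {x : ℝ} (hx : 0 ≤ x) (d : ℕ) :
    ∑ a ∈ range d, (1 + (-1) ^ (d - a)) * d.choose a * x ^ a ≤ 2 * (x + 1) ^ d := by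
  have hcoeff (a : ℕ) : 1 + (-1 : ℝ) ^ (d - a) ≤ 2 := by
    rcases neg_one_pow_eq_or ℝ (d - a) with h | h <;> rw [h] <;> norm_num
  calc ∑ a ∈ range d, (1 + (-1) ^ (d - a)) * d.choose a * x ^ a
      ≤ ∑ a ∈ range d, 2 * (d.choose a * x ^ a) := by
        refine sum_le_sum fun a _ => ?_
        rw [mul_assoc]
        exact mul_le_mul_of_nonneg_right (hcoeff a) (by positivity)
    _ ≤ ∑ a ∈ range (d + 1), 2 * (d.choose a * x ^ a) :=
        sum_le_sum_of_subset_of_nonneg (range_subset_range.2 d.le_succ) fun _ _ _ => by positivity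
    _ = 2 * (x + 1) ^ d := by
        rw [add_pow, mul_sum]
        exact sum_congr rfl fun a _ => by ring

variable {p} in
lemma symmBinomialMoment_le (hp0 : 0 ≤ p) (hp1 : p ≤ 1) (n : ℕ) {d : ℕ} (hd : Even d) :
    symmBinomialMoment p n d
      ≤ ∑ l ∈ range (d / 2 + 1), (n.choose l : ℝ) * (l : ℝ) ^ d * (2 * p * (1 - p)) ^ l := by
  have hpq : 0 ≤ p * (1 - p) := mul_nonneg hp0 (sub_nonneg.2 hp1)
  set s := 2 * p * (1 - p)
  induction n generalizing d with
  | zero => simp [symmBinomialMoment_zero_left, sum_range_succ']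
  | succ n ih =>
    have hrec : symmBinomialMoment p (n + 1) d = symmBinomialMoment p n d
        + p * (1 - p) * ∑ a ∈ range d,
            (1 + (-1) ^ (d - a)) * d.choose a * symmBinomialMoment p n a := by
      rw [symmBinomialMoment_succ, sum_range_succ, Nat.sub_self, Nat.choose_self]
      push_cast
      ring
    -- odd `a` contribute nothing; for even `a < d` the bound for `a` has fewer than `d / 2` terms
    have hterm : ∀ a ∈ range d, (1 + (-1) ^ (d - a)) * d.choose a * symmBinomialMoment p n a
        ≤ (1 + (-1) ^ (d - a)) * d.choose a
          * ∑ m ∈ range (d / 2), (n.choose m : ℝ) * (m : ℝ) ^ a * s ^ m := by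
      intro a ha
      have had : a < d := mem_range.1 ha
      by_cases hae : Even a
      · have hda : Even (d - a) := (Nat.even_sub had.le).2 (iff_of_true hd hae)
        rw [hda.neg_one_pow]
        refine mul_le_mul_of_nonneg_left ((ih hae).trans ?_) (by positivity)
        refine sum_le_sum_of_subset_of_nonneg (range_subset_range.2 ?_) fun _ _ _ => by positivity
        obtain ⟨i, rfl⟩ := hd
        obtain ⟨j, rfl⟩ := hae
        omega
      · have hda : Odd (d - a) :=
          Nat.not_even_iff_odd.1 fun h => hae (((Nat.even_sub had.le).1 h).1 hd)
        simp [hda.neg_one_pow]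
    calc symmBinomialMoment p (n + 1) d
        ≤ ∑ l ∈ range (d / 2 + 1), (n.choose l : ℝ) * (l : ℝ) ^ d * s ^ l
          + p * (1 - p) * ∑ m ∈ range (d / 2), (n.choose m : ℝ) * s ^ m
            * ∑ a ∈ range d, (1 + (-1) ^ (d - a)) * d.choose a * (m : ℝ) ^ a := by
          rw [hrec]
          refine add_le_add (ih hd)
            (mul_le_mul_of_nonneg_left ((sum_le_sum hterm).trans_eq ?_) hpq)
          simp only [mul_sum]
          rw [sum_comm]
          exact sum_congr rfl fun m _ => sum_congr rfl fun a _ => by ring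
      _ ≤ ∑ l ∈ range (d / 2 + 1), (n.choose l : ℝ) * (l : ℝ) ^ d * s ^ l
          + p * (1 - p) * ∑ m ∈ range (d / 2),
              (n.choose m : ℝ) * s ^ m * (2 * ((m : ℝ) + 1) ^ d) := by
          gcongr with m
          exact sum_one_add_neg_one_pow_mul_choose_mul_pow_le m.cast_nonneg d
      _ = ∑ l ∈ range (d / 2 + 1), ((n + 1).choose l : ℝ) * (l : ℝ) ^ d * s ^ l := by
          rw [sum_choose_succ_mul_pow_mul_pow, mul_sum, mul_sum]
          exact congrArg _ (sum_congr rfl fun m _ => by ring)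

end

lemma ae_le_of_measure_eq_zero {Ω : Type*} [MeasurableSpace Ω] {μ : Measure Ω} {S : Ω → ℕ} {n : ℕ}
    (hS : ∀ k, n < k → μ {ω | S ω = k} = 0) : ∀ᵐ ω ∂μ, S ω ≤ n := by
  rw [ae_iff]
  refine measure_mono_null (fun ω hω => Set.mem_iUnion.2 ⟨S ω - (n + 1), ?_⟩)
    (measure_iUnion_null fun k => hS (n + 1 + k) (by omega))
  simp only [Set.mem_ofPred_eq, not_le] at hω ⊢
  omega

lemma integral_le_sum_of_indepFun {Ω : Type*} [MeasurableSpace Ω] {μ : Measure Ω}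
    [IsFiniteMeasure μ] {S S' : Ω → ℕ} (hind : IndepFun S S' μ) {n : ℕ} (hS : ∀ᵐ ω ∂μ, S ω ≤ n)
    (hS' : ∀ᵐ ω ∂μ, S' ω ≤ n) {f : ℕ → ℕ → ℝ} (hf : ∀ j k, 0 ≤ f j k) :
    ∫ ω, f (S ω) (S' ω) ∂μ ≤ ∑ j ∈ range (n + 1), ∑ k ∈ range (n + 1),
      f j k * μ.real {ω | S ω = j} * μ.real {ω | S' ω = k} := by
  -- `S` and `S'` need not be measurable, so their level sets are replaced by measurable hulls
  set A : ℕ → ℕ → Set Ω := fun j k => toMeasurable μ ({ω | S ω = j} ∩ {ω | S' ω = k})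
  have hA (j k : ℕ) : Integrable ((A j k).indicator fun _ => f j k) μ :=
    (integrable_const _).indicator (measurableSet_toMeasurable μ _)
  set g : Ω → ℝ := fun ω =>
    ∑ j ∈ range (n + 1), ∑ k ∈ range (n + 1), (A j k).indicator (fun _ => f j k) ω
  have hg : Integrable g μ :=
    integrable_finsetSum _ fun j _ => integrable_finsetSum _ fun k _ => hA j k
  have hfg : ∀ᵐ ω ∂μ, f (S ω) (S' ω) ≤ g ω := by
    filter_upwards [hS, hS'] with ω hω hω'
    have hnn (j k : ℕ) : 0 ≤ (A j k).indicator (fun _ => f j k) ω :=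
      Set.indicator_nonneg (fun _ _ => hf j k) ω
    have hmem : ω ∈ A (S ω) (S' ω) :=
      subset_toMeasurable μ ({ω' | S ω' = S ω} ∩ {ω' | S' ω' = S' ω}) ⟨rfl, rfl⟩
    calc f (S ω) (S' ω) = (A (S ω) (S' ω)).indicator (fun _ => f (S ω) (S' ω)) ω :=
          (Set.indicator_of_mem hmem (fun _ => f (S ω) (S' ω))).symm
      _ ≤ g ω := (single_le_sum (fun k _ => hnn (S ω) k) (mem_range.2 (by omega))).trans
          (single_le_sum (f := fun j => ∑ k ∈ range (n + 1), (A j k).indicator (fun _ => f j k) ω)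
            (fun j _ => sum_nonneg fun k _ => hnn j k) (mem_range.2 (by omega)))
  refine (integral_mono_of_nonneg (ae_of_all _ fun ω => hf _ _) hg hfg).trans_eq ?_
  rw [integral_finsetSum _ fun j _ => integrable_finsetSum _ fun k _ => hA j k]
  refine sum_congr rfl fun j _ => ?_
  rw [integral_finsetSum _ fun k _ => hA j k]
  refine sum_congr rfl fun k _ => ?_
  have hjk : μ ({ω | S ω = j} ∩ {ω | S' ω = k}) = μ {ω | S ω = j} * μ {ω | S' ω = k} :=
    hind.measure_inter_preimage_eq_mul _ _ (measurableSet_singleton j) (measurableSet_singleton k)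
  rw [integral_indicator_const _ (measurableSet_toMeasurable μ _), smul_eq_mul, measureReal_def,
    measure_toMeasurable, hjk, ENNReal.toReal_mul, measureReal_def, measureReal_def]
  ring

lemma sum_range_choose_mul_pow_le {d : ℕ} (hd : Even d) (hd0 : d ≠ 0) (n : ℕ) {s : ℝ}
    (hs : 0 ≤ s) :
    ∑ l ∈ range (d / 2 + 1), (n.choose l : ℝ) * (l : ℝ) ^ d * s ^ l
      ≤ (d : ℝ) ^ (d / 2) * ∑ l ∈ Icc 1 (d / 2), (n.choose l : ℝ) * (l : ℝ) ^ (d / 2) * s ^ l := by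
  obtain ⟨m, rfl⟩ := hd
  rw [show (m + m) / 2 = m by omega, mul_sum]
  calc ∑ l ∈ range (m + 1), (n.choose l : ℝ) * (l : ℝ) ^ (m + m) * s ^ l
      = ∑ l ∈ Icc 1 m, (n.choose l : ℝ) * (l : ℝ) ^ (m + m) * s ^ l := by
        refine (sum_subset (fun l hl => mem_range.2 (by grind)) fun l _ hl => ?_).symm
        obtain rfl : l = 0 := by grind
        simp
        omega
    _ ≤ ∑ l ∈ Icc 1 m, ((m + m : ℕ) : ℝ) ^ m * ((n.choose l : ℝ) * (l : ℝ) ^ m * s ^ l) := by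
        refine sum_le_sum fun l hl => ?_
        have hl : (l : ℝ) ≤ ((m + m : ℕ) : ℝ) := by norm_cast; grind
        rw [show (n.choose l : ℝ) * (l : ℝ) ^ (m + m) * s ^ l
            = (l : ℝ) ^ m * ((n.choose l : ℝ) * (l : ℝ) ^ m * s ^ l) by ring]
        gcongr

/-- Moments of symmetrized binomial distributions. -/
theorem symm_binomial_moments :
    ∃ C : ℝ, 0 < C ∧
      ∀ (n : ℕ), 1 ≤ n → ∀ p : ℝ, 0 ≤ p → p ≤ 1 →
      ∀ (d : ℕ), 2 ≤ d → Even d →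
      ∀ (Ω : Type) [MeasurableSpace Ω] (μ : Measure Ω) [IsProbabilityMeasure μ]
        (S S' : Ω → ℕ),
        IndepFun S S' μ →
        (∀ k : ℕ, μ {ω | S ω = k} =
          ENNReal.ofReal ((n.choose k : ℝ) * p ^ k * (1 - p) ^ (n - k))) →
        (∀ k : ℕ, μ {ω | S' ω = k} =
          ENNReal.ofReal ((n.choose k : ℝ) * p ^ k * (1 - p) ^ (n - k))) →
        (∫ ω, ((S ω : ℝ) - (S' ω : ℝ)) ^ d ∂μ)
          ≤ (C * d) ^ (d / 2) *
            ∑ l ∈ Finset.Icc 1 (d / 2),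
              (n.choose l : ℝ) * (l : ℝ) ^ (d / 2) * (2 * p * (1 - p)) ^ l := by
  refine ⟨1, one_pos, fun n _ p hp0 hp1 d hd2 hd Ω _ μ _ S S' hind hS hS' => ?_⟩
  have hreal {T : Ω → ℕ} (hT : ∀ k : ℕ, μ {ω | T ω = k} =
      ENNReal.ofReal ((n.choose k : ℝ) * p ^ k * (1 - p) ^ (n - k))) (k : ℕ) :
      μ.real {ω | T ω = k} = binomialWeight p n k := by
    rw [measureReal_def, hT]
    exact ENNReal.toReal_ofReal (binomialWeight_nonneg hp0 hp1 n k)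
  have hle {T : Ω → ℕ} (hT : ∀ k : ℕ, μ {ω | T ω = k} =
      ENNReal.ofReal ((n.choose k : ℝ) * p ^ k * (1 - p) ^ (n - k))) : ∀ᵐ ω ∂μ, T ω ≤ n :=
    ae_le_of_measure_eq_zero fun k hk => by simp [hT, Nat.choose_eq_zero_of_lt hk]
  rw [one_mul]
  calc ∫ ω, ((S ω : ℝ) - (S' ω : ℝ)) ^ d ∂μ
      ≤ ∑ j ∈ range (n + 1), ∑ k ∈ range (n + 1),
          ((j : ℝ) - k) ^ d * μ.real {ω | S ω = j} * μ.real {ω | S' ω = k} :=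
        integral_le_sum_of_indepFun (f := fun j k => ((j : ℝ) - k) ^ d) hind (hle hS) (hle hS')
          fun j k => hd.pow_nonneg _
    _ = symmBinomialMoment p n d := by simp only [hreal hS, hreal hS', symmBinomialMoment]
    _ ≤ _ := symmBinomialMoment_le hp0 hp1 n hd
    _ ≤ _ := sum_range_choose_mul_pow_le hd (by omega) n (by nlinarith)
end

section
/- The family of random variables (S_x² − S_x)_{x ∈ α} is negatively associated: for every pair of disjoint subsets I, J ⊆ α and every pair of bounded functions f : (I → ℝ) → ℝ and g : (J → ℝ) → ℝ that are nondecreasing in each coordinate, E[ f((S_x² − S_x)_{x ∈ I}) · g((S_x² − S_x)_{x ∈ J}) ] ≤ E[ f((S_x² − S_x)_{x ∈ I}) ] · E[ g((S_x² − S_x)_{x ∈ J}) ]. -/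
open MeasureTheory ProbabilityTheory Finset

/-- The bin count `S_x`: number of sample points equal to `x`. -/
def binCount {α : Type} [DecidableEq α] (n : ℕ) (x : α) (ω : Fin n → α) : ℕ :=
  (Finset.univ.filter fun i => ω i = x).card

/-!
At a single trial the bin indicators `(1[X = x])_x` are negatively associated: the trial fills
exactly one bin, which lies outside `I` or outside `J`, so at every outcome one of `f`, `g` takes
its value at `0`, where both are minimal. Negative association survives independent products
(condition on one factor) and monotone functions of disjoint blocks of coordinates. The count
`S_x` is the sum over the trials of their indicators of `x`, and `S_x² - S_x` is a monotone
function of `S_x ∈ ℕ`.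
-/

lemma DependsOn.comp_sumElim_left {ι₁ ι₂ β γ : Type*} {f : (ι₁ ⊕ ι₂ → β) → γ}
    {s : Set (ι₁ ⊕ ι₂)} (hf : DependsOn f s) (v : ι₂ → β) :
    DependsOn (fun u => f (Sum.elim u v)) (Sum.inl ⁻¹' s) := fun u u' h =>
  hf <| by rintro (i | i) hi; exacts [h i hi, rfl]

lemma DependsOn.comp_sumElim_right {ι₁ ι₂ β γ : Type*} {f : (ι₁ ⊕ ι₂ → β) → γ}
    {s : Set (ι₁ ⊕ ι₂)} (hf : DependsOn f s) (u : ι₁ → β) :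
    DependsOn (fun v => f (Sum.elim u v)) (Sum.inr ⁻¹' s) := fun v v' h =>
  hf <| by rintro (i | i) hi; exacts [rfl, h i hi]

namespace ProbabilityTheory

section NegAssoc

variable {ι Ω : Type*} [Fintype Ω]

/-- `w` weighs the points of the finite sample space; a function of the coordinates in `I` is
modelled as a function on `ι → ℝ` that depends only on `I`. -/
def NegAssoc (w : Ω → ℝ) (X : ι → Ω → ℝ) : Prop :=
  ∀ I J : Set ι, Disjoint I J → ∀ f g : (ι → ℝ) → ℝ, Monotone f → Monotone g →
    DependsOn f I → DependsOn g J →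
    ∑ ω, w ω * (f (X · ω) * g (X · ω)) ≤ (∑ ω, w ω * f (X · ω)) * ∑ ω, w ω * g (X · ω)

lemma negAssoc_const {w : Ω → ℝ} (hw : ∑ ω, w ω = 1) (c : ι → ℝ) :
    NegAssoc w fun i _ => c i := by
  intro I J _ f g _ _ _ _
  simp only [← Finset.sum_mul, hw, one_mul, le_refl]

lemma negAssoc_piSingle {α : Type*} [Fintype α] [DecidableEq α] {q : α → ℝ}
    (hq0 : ∀ a, 0 ≤ q a) (hq1 : ∑ a, q a = 1) :
    NegAssoc q fun x a => (Pi.single a 1 : α → ℝ) x := by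
  intro I J hIJ f g hf hg hfI hgJ
  change ∑ a, q a * (f (Pi.single a 1) * g (Pi.single a 1)) ≤
    (∑ a, q a * f (Pi.single a 1)) * ∑ a, q a * g (Pi.single a 1)
  set c := f 0
  set d := g 0
  have hcross (a : α) : (f (Pi.single a 1) - c) * (g (Pi.single a 1) - d) = 0 := by
    have single_eq_zero_on (s : Set α) (ha : a ∉ s) :
        ∀ x ∈ s, (Pi.single a 1 : α → ℝ) x = (0 : α → ℝ) x :=
      fun x hx => Pi.single_eq_of_ne (ne_of_mem_of_not_mem hx ha) 1
    by_cases ha : a ∈ I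
    · rw [hgJ (single_eq_zero_on J (hIJ.notMem_of_mem_left ha)), sub_self, mul_zero]
    · rw [hfI (single_eq_zero_on I ha), sub_self, zero_mul]
  have hmean (t : ℝ) : ∑ a, q a * t = t := by rw [← sum_mul, hq1, one_mul]
  have hfc : c ≤ ∑ a, q a * f (Pi.single a 1) := hmean c ▸ sum_le_sum fun a _ =>
    mul_le_mul_of_nonneg_left (hf (Pi.single_nonneg.2 zero_le_one)) (hq0 a)
  have hgd : d ≤ ∑ a, q a * g (Pi.single a 1) := hmean d ▸ sum_le_sum fun a _ =>
    mul_le_mul_of_nonneg_left (hg (Pi.single_nonneg.2 zero_le_one)) (hq0 a)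
  have hfg : ∑ a, q a * (f (Pi.single a 1) * g (Pi.single a 1)) =
      d * ∑ a, q a * f (Pi.single a 1) + c * ∑ a, q a * g (Pi.single a 1) - c * d := by
    rw [mul_sum, mul_sum, ← hmean (c * d), ← sum_add_distrib, ← sum_sub_distrib]
    exact sum_congr rfl fun a _ => by linear_combination q a * hcross a
  rw [hfg]
  nlinarith [mul_nonneg (sub_nonneg.2 hfc) (sub_nonneg.2 hgd)]

lemma NegAssoc.prod {ι₁ ι₂ Ω₁ Ω₂ : Type*} [Fintype Ω₁] [Fintype Ω₂]
    {w₁ : Ω₁ → ℝ} {w₂ : Ω₂ → ℝ} {X₁ : ι₁ → Ω₁ → ℝ} {X₂ : ι₂ → Ω₂ → ℝ}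
    (hw₁ : ∀ a, 0 ≤ w₁ a) (hw₂ : ∀ b, 0 ≤ w₂ b) (h₁ : NegAssoc w₁ X₁) (h₂ : NegAssoc w₂ X₂) :
    NegAssoc (fun ω : Ω₁ × Ω₂ => w₁ ω.1 * w₂ ω.2)
      fun i ω => Sum.elim (X₁ · ω.1) (X₂ · ω.2) i := by
  intro I J hIJ f g hf hg hfI hgJ
  have hsplit (h : (ι₁ ⊕ ι₂ → ℝ) → ℝ) :
      ∑ ω : Ω₁ × Ω₂, w₁ ω.1 * w₂ ω.2 * h (Sum.elim (X₁ · ω.1) (X₂ · ω.2)) =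
        ∑ a, w₁ a * ∑ b, w₂ b * h (Sum.elim (X₁ · a) (X₂ · b)) := by
    simp only [Fintype.sum_prod_type, mul_sum, mul_assoc]
  -- conditional expectations given the first factor
  let F (u : ι₁ → ℝ) := ∑ b, w₂ b * f (Sum.elim u (X₂ · b))
  let G (u : ι₁ → ℝ) := ∑ b, w₂ b * g (Sum.elim u (X₂ · b))
  have hinner (u : ι₁ → ℝ) :
      ∑ b, w₂ b * (f (Sum.elim u (X₂ · b)) * g (Sum.elim u (X₂ · b))) ≤ F u * G u :=
    h₂ _ _ (hIJ.preimage Sum.inr) _ _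
      (fun v v' hv => hf (Sum.elim_le_elim_iff.2 ⟨le_rfl, hv⟩))
      (fun v v' hv => hg (Sum.elim_le_elim_iff.2 ⟨le_rfl, hv⟩))
      (hfI.comp_sumElim_right u) (hgJ.comp_sumElim_right u)
  have houter := h₁ _ _ (hIJ.preimage Sum.inl) F G
    (fun u u' hu => sum_le_sum fun b _ =>
      mul_le_mul_of_nonneg_left (hf (Sum.elim_le_elim_iff.2 ⟨hu, le_rfl⟩)) (hw₂ b))
    (fun u u' hu => sum_le_sum fun b _ =>
      mul_le_mul_of_nonneg_left (hg (Sum.elim_le_elim_iff.2 ⟨hu, le_rfl⟩)) (hw₂ b))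
    (fun u u' hu => sum_congr rfl fun b _ => congrArg _ (hfI.comp_sumElim_left _ hu))
    (fun u u' hu => sum_congr rfl fun b _ => congrArg _ (hgJ.comp_sumElim_left _ hu))
  calc _ = ∑ a, w₁ a * ∑ b, w₂ b *
        (f (Sum.elim (X₁ · a) (X₂ · b)) * g (Sum.elim (X₁ · a) (X₂ · b))) :=
        hsplit fun v => f v * g v
    _ ≤ ∑ a, w₁ a * (F (X₁ · a) * G (X₁ · a)) :=
        sum_le_sum fun a _ => mul_le_mul_of_nonneg_left (hinner _) (hw₁ a)
    _ ≤ _ := houter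
    _ = _ := by rw [hsplit f, hsplit g]

lemma NegAssoc.comp_equiv {Ω' : Type*} [Fintype Ω'] {w : Ω → ℝ} {X : ι → Ω → ℝ}
    (h : NegAssoc w X) (σ : Ω' ≃ Ω) : NegAssoc (fun ω' => w (σ ω')) fun i ω' => X i (σ ω') := by
  intro I J hIJ f g hf hg hfI hgJ
  have hσ (F : (ι → ℝ) → ℝ) : ∑ ω', w (σ ω') * F (X · (σ ω')) = ∑ ω, w ω * F (X · ω) :=
    Equiv.sum_comp σ fun ω => w ω * F (X · ω)
  exact (hσ fun v => f v * g v).trans_le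
    ((h I J hIJ f g hf hg hfI hgJ).trans_eq (by rw [hσ f, hσ g]))

lemma NegAssoc.comp {κ : Type*} {w : Ω → ℝ} {X : ι → Ω → ℝ} (h : NegAssoc w X)
    {B : κ → Set ι} (hB : Pairwise (Function.onFun Disjoint B)) {Φ : κ → (ι → ℝ) → ℝ}
    (hΦ : ∀ k, Monotone (Φ k)) (hΦB : ∀ k, DependsOn (Φ k) (B k)) :
    NegAssoc w fun k ω => Φ k (X · ω) := by
  intro I J hIJ f g hf hg hfI hgJ
  refine h (⋃ k ∈ I, B k) (⋃ k ∈ J, B k) ?_ (fun v => f fun k => Φ k v)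
    (fun v => g fun k => Φ k v) (fun v v' hv => hf fun k => hΦ k hv)
    (fun v v' hv => hg fun k => hΦ k hv)
    (fun v v' hv => hfI fun k hk => hΦB k fun i hi => hv i (Set.mem_biUnion hk hi))
    (fun v v' hv => hgJ fun k hk => hΦB k fun i hi => hv i (Set.mem_biUnion hk hi))
  exact Set.disjoint_iUnion₂_left.2 fun k hk => Set.disjoint_iUnion₂_right.2 fun k' hk' =>
    hB (hIJ.ne_of_mem hk hk')

lemma NegAssoc.comp_monotone {w : Ω → ℝ} {X : ι → Ω → ℝ} (h : NegAssoc w X)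
    {φ : ι → ℝ → ℝ} (hφ : ∀ i, Monotone (φ i)) : NegAssoc w fun i ω => φ i (X i ω) :=
  h.comp (B := fun i => {i}) (fun _ _ hij => Set.disjoint_singleton.2 hij)
    (fun i _ _ hv => hφ i (hv i)) fun i _ _ hv => congrArg (φ i) (hv i rfl)

end NegAssoc

section BinCount

variable {α : Type} [DecidableEq α]

lemma binCount_succ {n : ℕ} (x : α) (ω : Fin (n + 1) → α) :
    (binCount (n + 1) x ω : ℝ) = (Pi.single (ω 0) 1 : α → ℝ) x + binCount n x (Fin.tail ω) := by
  simp [binCount, Fin.card_filter_univ_succ', Pi.single_apply, eq_comm, Fin.tail]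

lemma negAssoc_binCount [Fintype α] {q : α → ℝ} (hq0 : ∀ a, 0 ≤ q a) (hq1 : ∑ a, q a = 1)
    (n : ℕ) :
    NegAssoc (fun ω : Fin n → α => ∏ i, q (ω i)) fun x ω => (binCount n x ω : ℝ) := by
  induction n with
  | zero => simpa [binCount] using negAssoc_const (Ω := Fin 0 → α) (by simp) (0 : α → ℝ)
  | succ n ih =>
    have hw (ω : Fin n → α) : 0 ≤ ∏ i, q (ω i) := prod_nonneg fun i _ => hq0 _
    have := (((negAssoc_piSingle hq0 hq1).prod hq0 hw ih).comp
      (B := fun x => {Sum.inl x, Sum.inr x}) (Φ := fun x v => v (.inl x) + v (.inr x))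
      (fun x y hxy => by simpa [Function.onFun, Set.disjoint_left] using hxy)
      (fun x v v' hv => add_le_add (hv _) (hv _))
      (fun x v v' hv => by simp [hv])).comp_equiv (Fin.consEquiv fun _ => α).symm
    convert this using 2 with ω x ω
    · simp [Fin.prod_univ_succ, Fin.consEquiv, Fin.tail]
    · simp [binCount_succ, Fin.consEquiv]

-- `t ↦ t ^ 2 - t` is monotone only on `[1/2, ∞)`; clamping at `1` changes nothing on `ℕ`
lemma monotone_max_one_sq_sub : Monotone fun t : ℝ => max t 1 ^ 2 - max t 1 := by
  intro s t hst
  have h1 : 1 ≤ max s 1 := le_max_right s 1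
  have h2 : max s 1 ≤ max t 1 := max_le_max_right 1 hst
  dsimp only
  nlinarith

lemma max_one_sq_sub_natCast (N : ℕ) : max (N : ℝ) 1 ^ 2 - max (N : ℝ) 1 = (N : ℝ) ^ 2 - N := by
  rcases N.eq_zero_or_pos with rfl | hN
  · norm_num
  · rw [max_eq_left (by exact_mod_cast hN)]

lemma negAssoc_binCount_sq_sub [Fintype α] {q : α → ℝ} (hq0 : ∀ a, 0 ≤ q a)
    (hq1 : ∑ a, q a = 1) (n : ℕ) :
    NegAssoc (fun ω : Fin n → α => ∏ i, q (ω i))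
      fun x ω => (binCount n x ω : ℝ) ^ 2 - binCount n x ω := by
  simpa only [max_one_sq_sub_natCast] using
    (negAssoc_binCount hq0 hq1 n).comp_monotone fun _ => monotone_max_one_sq_sub

end BinCount

lemma integral_pi_eq_sum {α : Type*} [Fintype α] [MeasurableSpace α] [MeasurableSingletonClass α]
    (μ : Measure α) [IsFiniteMeasure μ] {n : ℕ} (h : (Fin n → α) → ℝ) :
    ∫ ω, h ω ∂(Measure.pi fun _ : Fin n => μ) = ∑ ω, (∏ i, μ.real {ω i}) * h ω := by
  simp [integral_fintype, Measure.real, ENNReal.toReal_prod]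

end ProbabilityTheory

theorem bin_contributions_neg_associated_general
    (α : Type) [Fintype α] [DecidableEq α] [MeasurableSpace α] [MeasurableSingletonClass α]
    (μ : Measure α) [IsProbabilityMeasure μ]
    (n : ℕ)
    (I J : Finset α) (hIJ : Disjoint I J)
    (f : (↥I → ℝ) → ℝ) (g : (↥J → ℝ) → ℝ)
    (hf : Monotone f) (hg : Monotone g) :
    (∫ ω, f (fun x => ((binCount n (x : α) ω : ℝ)) ^ 2 - (binCount n (x : α) ω : ℝ)) *
          g (fun x => ((binCount n (x : α) ω : ℝ)) ^ 2 - (binCount n (x : α) ω : ℝ))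
        ∂(Measure.pi fun _ : Fin n => μ))
      ≤ (∫ ω, f (fun x => ((binCount n (x : α) ω : ℝ)) ^ 2 - (binCount n (x : α) ω : ℝ))
            ∂(Measure.pi fun _ : Fin n => μ)) *
        (∫ ω, g (fun x => ((binCount n (x : α) ω : ℝ)) ^ 2 - (binCount n (x : α) ω : ℝ))
            ∂(Measure.pi fun _ : Fin n => μ)) := by
  have hNA := negAssoc_binCount_sq_sub (q := fun a => μ.real {a})
    (fun _ => measureReal_nonneg) (by simp) n
  simp only [integral_pi_eq_sum]
  exact hNA I J (by simpa using hIJ) (fun v => f fun x => v x) (fun v => g fun x => v x)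
    (fun v v' hv => hf fun x => hv x) (fun v v' hv => hg fun x => hv x)
    (fun v v' hv => congrArg f (funext fun x => hv x x.2))
    (fun v v' hv => congrArg g (funext fun x => hv x x.2))

/-- The family `(S_x² − S_x)_x` of bin contributions is negatively associated. -/
theorem bin_contributions_neg_associated
    (α : Type) [Fintype α] [DecidableEq α] [MeasurableSpace α] [MeasurableSingletonClass α]
    (p : α → ℝ) (hp0 : ∀ x, 0 ≤ p x) (hp1 : ∑ x, p x = 1)
    (μ : Measure α) [IsProbabilityMeasure μ] (hμ : ∀ x, μ {x} = ENNReal.ofReal (p x))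
    (n : ℕ)
    (I J : Finset α) (hIJ : Disjoint I J)
    (f : (↥I → ℝ) → ℝ) (g : (↥J → ℝ) → ℝ)
    (hf : Monotone f) (hg : Monotone g)
    (hfb : ∃ M : ℝ, ∀ v, |f v| ≤ M) (hgb : ∃ M : ℝ, ∀ v, |g v| ≤ M) :
    (∫ ω, f (fun x => ((binCount n (x : α) ω : ℝ)) ^ 2 - (binCount n (x : α) ω : ℝ)) *
          g (fun x => ((binCount n (x : α) ω : ℝ)) ^ 2 - (binCount n (x : α) ω : ℝ))
        ∂(Measure.pi fun _ : Fin n => μ))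
      ≤ (∫ ω, f (fun x => ((binCount n (x : α) ω : ℝ)) ^ 2 - (binCount n (x : α) ω : ℝ))
            ∂(Measure.pi fun _ : Fin n => μ)) *
        (∫ ω, g (fun x => ((binCount n (x : α) ω : ℝ)) ^ 2 - (binCount n (x : α) ω : ℝ))
            ∂(Measure.pi fun _ : Fin n => μ)) :=
  bin_contributions_neg_associated_general α μ n I J hIJ f g hf hg
end

section
/- There exists a universal constant C > 0 such that for every finite type α, every probability mass function p, and every integer n ≥ 2: (a) for each x ∈ α, Var[S_x² − S_x] ≤ C·((n·p(x))² + (n·p(x))³), and (b) the collision estimator satisfies Var[Q̃] ≤ C·( (∑_x p(x)²)/n² + (∑_x p(x)³)/n ). -/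
open MeasureTheory ProbabilityTheory Finset

/-- The collision estimator: fraction of colliding ordered pairs in the sample. -/
noncomputable def collEst {α : Type} [DecidableEq α] (n : ℕ) (ω : Fin n → α) : ℝ :=
  ((Finset.univ.filter fun ij : Fin n × Fin n => ij.1 ≠ ij.2 ∧ ω ij.1 = ω ij.2).card : ℝ) /
    ((n : ℝ) * ((n : ℝ) - 1))

/-! `S_x² - S_x` counts the ordered pairs `i ≠ j` with `X_i = X_j = x`, so it is a sum of
indicators of the events `X_i = X_j = x`. Two such events are independent when their index pairs
are disjoint, and incompatible when the pairs overlap but the bins differ. Hence all covariances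
between different bins are nonpositive, while within one bin only the `O(n²)` pairs of index pairs
with the same support (covariance `≤ p²`) and the `O(n³)` pairs sharing one index
(covariance `≤ p³`) contribute. This gives (a); since the collision count is the sum of the bin
statistics, (b) follows from (a) and the nonpositive cross-bin covariances. -/

namespace CollisionVariance

section General

variable {Ω ι : Type*} [MeasurableSpace Ω] {μ : Measure Ω}

lemma variance_sum_le_sum_variance_of_covariance_nonpos [IsFiniteMeasure μ] {X : ι → Ω → ℝ}
    {s : Finset ι} (hX : ∀ i ∈ s, MemLp (X i) 2 μ)
    (hcov : ∀ i ∈ s, ∀ j ∈ s, i ≠ j → cov[X i, X j; μ] ≤ 0) :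
    Var[fun ω ↦ ∑ i ∈ s, X i ω; μ] ≤ ∑ i ∈ s, Var[X i; μ] := by
  classical
  rw [variance_fun_sum' hX]
  refine Finset.sum_le_sum fun i hi ↦ ?_
  rw [← Finset.add_sum_erase s _ hi, covariance_self (hX i hi).aemeasurable]
  have : ∑ j ∈ s.erase i, cov[X i, X j; μ] ≤ 0 := Finset.sum_nonpos fun j hj ↦
    hcov i hi j (Finset.mem_of_mem_erase hj) (Finset.ne_of_mem_erase hj).symm
  linarith

lemma memLp_indicator_one [IsFiniteMeasure μ] {s : Set Ω} (hs : MeasurableSet s) :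
    MemLp (s.indicator (1 : Ω → ℝ)) 2 μ :=
  memLp_indicator_const 2 hs 1 (Or.inr (measure_ne_top μ s))

lemma covariance_indicator_one [IsProbabilityMeasure μ] {s t : Set Ω} (hs : MeasurableSet s)
    (ht : MeasurableSet t) :
    cov[s.indicator 1, t.indicator 1; μ] = μ.real (s ∩ t) - μ.real s * μ.real t := by
  rw [covariance_eq_sub (memLp_indicator_one hs) (memLp_indicator_one ht),
    ← Set.inter_indicator_one, integral_indicator_one (hs.inter ht), integral_indicator_one hs,
    integral_indicator_one ht]

end General

section ProductMeasure

variable {ι : Type*} [Fintype ι] [DecidableEq ι] {α : ι → Type*} [∀ i, MeasurableSpace (α i)]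
  {μ : ∀ i, Measure (α i)} [∀ i, IsProbabilityMeasure (μ i)]

lemma measure_pi_inter_pi_of_disjoint {S T : Finset ι} (hST : Disjoint S T)
    (f g : ∀ i, Set (α i)) :
    Measure.pi μ ((S : Set ι).pi f ∩ (T : Set ι).pi g)
      = Measure.pi μ ((S : Set ι).pi f) * Measure.pi μ ((T : Set ι).pi g) := by
  set h : ∀ i, Set (α i) := fun i ↦ if i ∈ S then f i else g i
  have hf : (S : Set ι).pi f = (S : Set ι).pi h :=
    Set.pi_congr rfl fun i hi ↦ (if_pos hi).symm
  have hg : (T : Set ι).pi g = (T : Set ι).pi h :=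
    Set.pi_congr rfl fun i hi ↦ (if_neg (Finset.disjoint_right.1 hST hi)).symm
  rw [hf, hg, ← Set.union_pi, ← Finset.coe_union, Measure.pi_pi_finset, Measure.pi_pi_finset,
    Measure.pi_pi_finset, Finset.prod_union hST]

end ProductMeasure

section PairCounting

variable {ι : Type*} [DecidableEq ι]

lemma card_union_pair_ge_three {e e' : ι × ι} (he : e.1 ≠ e.2) (he' : e'.1 ≠ e'.2)
    (hne : ({e'.1, e'.2} : Finset ι) ≠ {e.1, e.2}) : 3 ≤ #({e.1, e.2} ∪ {e'.1, e'.2}) := by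
  by_contra! h
  have hcard (f : ι × ι) (hf : f.1 ≠ f.2) : #({e.1, e.2} ∪ {e'.1, e'.2}) ≤ #{f.1, f.2} := by
    rw [Finset.card_pair hf]; omega
  have h₁ := Finset.eq_of_subset_of_card_le Finset.subset_union_left (hcard e he)
  have h₂ := Finset.eq_of_subset_of_card_le Finset.subset_union_right (hcard e' he')
  exact hne (h₂.trans h₁.symm)

lemma card_filter_pair_eq_le [Fintype ι] (e : ι × ι) :
    #{e' ∈ (univ : Finset ι).offDiag | ({e'.1, e'.2} : Finset ι) = {e.1, e.2}} ≤ 2 := by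
  refine (Finset.card_le_card (t := {e, e.swap}) fun e' he' ↦ ?_).trans Finset.card_le_two
  have h := congrArg ((↑) : Finset ι → Set ι) (Finset.mem_filter.1 he').2
  simp only [Finset.coe_pair, Set.pair_eq_pair_iff] at h
  rcases h with ⟨h₁, h₂⟩ | ⟨h₁, h₂⟩ <;> simp [Prod.ext_iff, h₁, h₂]

lemma card_filter_not_disjoint_le [Fintype ι] (e : ι × ι) :
    #{e' ∈ (univ : Finset ι).offDiag | ¬Disjoint ({e.1, e.2} : Finset ι) {e'.1, e'.2}}
      ≤ 4 * Fintype.card ι := by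
  have hsub : {e' ∈ (univ : Finset ι).offDiag |
      ¬Disjoint ({e.1, e.2} : Finset ι) {e'.1, e'.2}}
      ⊆ ({e.1, e.2} : Finset ι) ×ˢ Finset.univ ∪ Finset.univ ×ˢ ({e.1, e.2} : Finset ι) := by
    intro e' he'
    obtain ⟨i, hi, hi'⟩ := Finset.not_disjoint_iff.1 (Finset.mem_filter.1 he').2
    simp only [Finset.mem_insert, Finset.mem_singleton] at hi'
    rcases hi' with rfl | rfl <;> simp [hi]
  refine (Finset.card_le_card hsub).trans ((Finset.card_union_le _ _).trans ?_)
  simp only [Finset.card_product, Finset.card_univ]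
  have := Finset.card_le_two (a := e.1) (b := e.2)
  nlinarith

end PairCounting

section PairEvent

variable {ι α : Type*}

lemma measureReal_pi_pi_singleton [Fintype ι] [MeasurableSpace α] {μ : Measure α}
    [IsProbabilityMeasure μ] (s : Finset ι) (x : α) :
    (Measure.pi fun _ : ι ↦ μ).real ((s : Set ι).pi fun _ ↦ {x}) = μ.real {x} ^ #s := by
  rw [measureReal_def, Measure.pi_pi_finset, Finset.prod_const, ENNReal.toReal_pow,
    measureReal_def]

variable [DecidableEq ι]

def pairEvent (x : α) (e : ι × ι) : Set (ι → α) :=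
  (({e.1, e.2} : Finset ι) : Set ι).pi fun _ ↦ {x}

lemma mem_pairEvent {x : α} {e : ι × ι} {ω : ι → α} :
    ω ∈ pairEvent x e ↔ ω e.1 = x ∧ ω e.2 = x := by
  simp [pairEvent]

variable [MeasurableSpace α] [MeasurableSingletonClass α]

lemma measurableSet_pairEvent (x : α) (e : ι × ι) : MeasurableSet (pairEvent x e) :=
  MeasurableSet.pi (Finset.countable_toSet _) fun _ _ ↦ measurableSet_singleton x

variable [Fintype ι] {μ : Measure α} [IsProbabilityMeasure μ]

lemma covariance_pairEvent_le (x : α) (e e' : ι × ι) :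
    cov[(pairEvent x e).indicator 1, (pairEvent x e').indicator 1; Measure.pi fun _ : ι ↦ μ]
      ≤ μ.real {x} ^ #({e.1, e.2} ∪ {e'.1, e'.2}) := by
  have hinter : pairEvent x e ∩ pairEvent x e'
      = ((({e.1, e.2} ∪ {e'.1, e'.2} : Finset ι)) : Set ι).pi fun _ ↦ {x} := by
    rw [pairEvent, pairEvent, ← Set.union_pi, ← Finset.coe_union]
  have := mul_nonneg (measureReal_nonneg (μ := Measure.pi fun _ : ι ↦ μ) (s := pairEvent x e))
    (measureReal_nonneg (μ := Measure.pi fun _ : ι ↦ μ) (s := pairEvent x e'))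
  rw [covariance_indicator_one (measurableSet_pairEvent x e) (measurableSet_pairEvent x e'),
    hinter, measureReal_pi_pi_singleton]
  linarith

lemma covariance_pairEvent_eq_zero_of_disjoint (x y : α) {e e' : ι × ι}
    (hd : Disjoint ({e.1, e.2} : Finset ι) {e'.1, e'.2}) :
    cov[(pairEvent x e).indicator 1, (pairEvent y e').indicator 1; Measure.pi fun _ : ι ↦ μ]
      = 0 := by
  rw [covariance_indicator_one (measurableSet_pairEvent x e) (measurableSet_pairEvent y e'),
    measureReal_def, pairEvent, pairEvent, measure_pi_inter_pi_of_disjoint hd, ENNReal.toReal_mul]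
  simp [measureReal_def]

lemma covariance_pairEvent_nonpos {x y : α} (hxy : x ≠ y) (e e' : ι × ι) :
    cov[(pairEvent x e).indicator 1, (pairEvent y e').indicator 1; Measure.pi fun _ : ι ↦ μ]
      ≤ 0 := by
  by_cases hd : Disjoint ({e.1, e.2} : Finset ι) {e'.1, e'.2}
  · exact (covariance_pairEvent_eq_zero_of_disjoint x y hd).le
  obtain ⟨i, hi, hi'⟩ := Finset.not_disjoint_iff.1 hd
  have hempty : pairEvent x e ∩ pairEvent y e' = ∅ := by
    refine Set.eq_empty_of_forall_notMem fun ω ⟨hω, hω'⟩ ↦ hxy ?_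
    rw [mem_pairEvent] at hω hω'
    simp only [Finset.mem_insert, Finset.mem_singleton] at hi hi'
    grind
  rw [covariance_indicator_one (measurableSet_pairEvent x e) (measurableSet_pairEvent y e'),
    hempty, measureReal_empty, zero_sub, neg_nonpos]
  positivity

lemma sum_covariance_pairEvent_le (x : α) {e : ι × ι} (he : e.1 ≠ e.2) :
    ∑ e' ∈ (univ : Finset ι).offDiag,
        cov[(pairEvent x e).indicator 1, (pairEvent x e').indicator 1; Measure.pi fun _ : ι ↦ μ]
      ≤ 2 * μ.real {x} ^ 2 + 4 * Fintype.card ι * μ.real {x} ^ 3 := by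
  set q := μ.real {x}
  have hq₀ : 0 ≤ q := measureReal_nonneg
  have hq₁ : q ≤ 1 := measureReal_le_one
  have hterm : ∀ e' ∈ (univ : Finset ι).offDiag,
      cov[(pairEvent x e).indicator 1, (pairEvent x e').indicator 1; Measure.pi fun _ : ι ↦ μ]
        ≤ (if ({e'.1, e'.2} : Finset ι) = {e.1, e.2} then q ^ 2 else 0)
          + (if ¬Disjoint ({e.1, e.2} : Finset ι) {e'.1, e'.2} then q ^ 3 else 0) := by
    intro e' he'
    have he' : e'.1 ≠ e'.2 := (Finset.mem_offDiag.1 he').2.2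
    by_cases hd : Disjoint ({e.1, e.2} : Finset ι) {e'.1, e'.2}
    · rw [covariance_pairEvent_eq_zero_of_disjoint x x hd]
      positivity
    refine (covariance_pairEvent_le x e e').trans ?_
    by_cases hsame : ({e'.1, e'.2} : Finset ι) = {e.1, e.2}
    · rw [hsame, Finset.union_self, Finset.card_pair he, if_pos rfl]
      exact le_add_of_nonneg_right (by positivity)
    · rw [if_neg hsame, if_pos hd, zero_add]
      exact pow_le_pow_of_le_one hq₀ hq₁ (card_union_pair_ge_three he he' hsame)
  refine (Finset.sum_le_sum hterm).trans ?_
  simp only [Finset.sum_add_distrib, Finset.sum_ite, Finset.sum_const, smul_zero, add_zero,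
    nsmul_eq_mul]
  have h₂ : (#{e' ∈ (univ : Finset ι).offDiag |
      ({e'.1, e'.2} : Finset ι) = {e.1, e.2}} : ℝ) ≤ 2 := by
    exact_mod_cast card_filter_pair_eq_le e
  have h₄ : (#{e' ∈ (univ : Finset ι).offDiag |
      ¬Disjoint ({e.1, e.2} : Finset ι) {e'.1, e'.2}} : ℝ) ≤ 4 * Fintype.card ι := by
    exact_mod_cast card_filter_not_disjoint_le e
  gcongr

lemma variance_sum_pairEvent_le (x : α) :
    Var[fun ω ↦ ∑ e ∈ (univ : Finset ι).offDiag, (pairEvent x e).indicator 1 ω;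
        Measure.pi fun _ : ι ↦ μ]
      ≤ 2 * (Fintype.card ι * μ.real {x}) ^ 2 + 4 * (Fintype.card ι * μ.real {x}) ^ 3 := by
  set n : ℝ := (Fintype.card ι : ℝ)
  have hq₀ : 0 ≤ μ.real {x} := measureReal_nonneg
  have hcard : (#(univ : Finset ι).offDiag : ℝ) ≤ n ^ 2 := by
    rw [Finset.offDiag_card, Finset.card_univ, Nat.cast_sub (Nat.le_mul_self _)]
    push_cast
    nlinarith
  rw [variance_fun_sum' fun e _ ↦ memLp_indicator_one (measurableSet_pairEvent x e)]
  calc _ ≤ ∑ _e ∈ (univ : Finset ι).offDiag, (2 * μ.real {x} ^ 2 + 4 * n * μ.real {x} ^ 3) :=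
        Finset.sum_le_sum fun e he ↦ sum_covariance_pairEvent_le x (Finset.mem_offDiag.1 he).2.2
    _ ≤ n ^ 2 * (2 * μ.real {x} ^ 2 + 4 * n * μ.real {x} ^ 3) := by
        rw [Finset.sum_const, nsmul_eq_mul]
        gcongr
    _ = _ := by ring

lemma covariance_sum_pairEvent_nonpos {x y : α} (hxy : x ≠ y) (s : Finset (ι × ι)) :
    cov[fun ω ↦ ∑ e ∈ s, (pairEvent x e).indicator 1 ω,
        fun ω ↦ ∑ e ∈ s, (pairEvent y e).indicator 1 ω; Measure.pi fun _ : ι ↦ μ] ≤ 0 := by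
  rw [covariance_fun_sum_fun_sum' (fun e _ ↦ memLp_indicator_one (measurableSet_pairEvent x e))
    (fun e _ ↦ memLp_indicator_one (measurableSet_pairEvent y e))]
  exact Finset.sum_nonpos fun e _ ↦ Finset.sum_nonpos fun e' _ ↦
    covariance_pairEvent_nonpos hxy e e'

end PairEvent

section Sample

variable {α : Type} [DecidableEq α]

lemma binCount_sq_sub_binCount (n : ℕ) (x : α) (ω : Fin n → α) :
    (binCount n x ω : ℝ) ^ 2 - binCount n x ω = #(({i | ω i = x} : Finset (Fin n)).offDiag) := by
  rw [Finset.offDiag_card, Nat.cast_sub (Nat.le_mul_self _), binCount]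
  push_cast
  ring

lemma card_offDiag_filter_eq_sum_indicator {ι : Type*} [Fintype ι] [DecidableEq ι] (x : α)
    (ω : ι → α) :
    (#(({i | ω i = x} : Finset ι).offDiag) : ℝ)
      = ∑ e ∈ (univ : Finset ι).offDiag, (pairEvent x e).indicator 1 ω := by
  classical
  simp only [Set.indicator_apply, Pi.one_apply, Finset.sum_boole]
  congr 2
  ext e
  simp only [Finset.mem_filter, Finset.mem_offDiag, Finset.mem_univ, true_and, mem_pairEvent]
  tauto

lemma card_collisions_eq_sum [Fintype α] (n : ℕ) (ω : Fin n → α) :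
    #{ij : Fin n × Fin n | ij.1 ≠ ij.2 ∧ ω ij.1 = ω ij.2}
      = ∑ x, #(({i | ω i = x} : Finset (Fin n)).offDiag) := by
  rw [Finset.card_eq_sum_card_fiberwise (f := fun ij ↦ ω ij.1) (t := Finset.univ) (by simp)]
  refine Finset.sum_congr rfl fun x _ ↦ congrArg Finset.card ?_
  ext ij
  simp only [Finset.mem_filter, Finset.mem_univ, true_and, Finset.mem_offDiag]
  grind

lemma collEst_eq_sum [Fintype α] (n : ℕ) (ω : Fin n → α) :
    collEst n ω = ((n : ℝ) * (n - 1))⁻¹ * ∑ x, ((binCount n x ω : ℝ) ^ 2 - binCount n x ω) := by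
  rw [collEst, card_collisions_eq_sum, div_eq_inv_mul]
  simp only [binCount_sq_sub_binCount, Nat.cast_sum]

end Sample

lemma inv_mul_sub_one_sq_mul_le {N A B : ℝ} (hN : 2 ≤ N) (hA : 0 ≤ A) (hB : 0 ≤ B) :
    ((N * (N - 1))⁻¹) ^ 2 * (2 * N ^ 2 * A + 4 * N ^ 3 * B) ≤ 16 * (A / N ^ 2 + B / N) := by
  have hN₀ : 0 < N := by linarith
  have hN₁ : 0 < N - 1 := by linarith
  have hsq : N ^ 2 / 4 ≤ (N - 1) ^ 2 := by nlinarith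
  field_simp
  nlinarith [mul_le_mul_of_nonneg_left hsq (by positivity : 0 ≤ 16 * (A + N * B))]

end CollisionVariance

open CollisionVariance

/-- Variance bounds for bin contributions and for the collision estimator. -/
theorem collision_estimator_variance :
    ∃ C : ℝ, 0 < C ∧
      ∀ (α : Type) [Fintype α] [DecidableEq α] [MeasurableSpace α] [MeasurableSingletonClass α]
        (p : α → ℝ), (∀ x, 0 ≤ p x) → (∑ x, p x = 1) →
      ∀ (μ : Measure α) [IsProbabilityMeasure μ], (∀ x, μ {x} = ENNReal.ofReal (p x)) →
      ∀ (n : ℕ), 2 ≤ n →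
        (∀ x : α,
          variance (fun ω : Fin n → α => (binCount n x ω : ℝ) ^ 2 - (binCount n x ω : ℝ))
              (Measure.pi fun _ : Fin n => μ)
            ≤ C * (((n : ℝ) * p x) ^ 2 + ((n : ℝ) * p x) ^ 3)) ∧
        variance (fun ω : Fin n → α => collEst n ω) (Measure.pi fun _ : Fin n => μ)
          ≤ C * ((∑ x, (p x) ^ 2) / (n : ℝ) ^ 2 + (∑ x, (p x) ^ 3) / (n : ℝ)) := by
  refine ⟨16, by norm_num, fun α _ _ _ _ p hp₀ _ μ _ hμ n hn ↦ ?_⟩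
  have hp : ∀ x, μ.real {x} = p x := fun x ↦ by
    rw [measureReal_def, hμ, ENNReal.toReal_ofReal (hp₀ x)]
  have hbin : ∀ x, (fun ω : Fin n → α ↦ (binCount n x ω : ℝ) ^ 2 - binCount n x ω)
      = fun ω ↦ ∑ e ∈ (univ : Finset (Fin n)).offDiag, (pairEvent x e).indicator 1 ω :=
    fun x ↦ funext fun ω ↦ by
      rw [binCount_sq_sub_binCount, card_offDiag_filter_eq_sum_indicator]
  have hvar : ∀ x, Var[fun ω : Fin n → α ↦ (binCount n x ω : ℝ) ^ 2 - binCount n x ω;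
      Measure.pi fun _ : Fin n ↦ μ] ≤ 2 * (n * p x) ^ 2 + 4 * (n * p x) ^ 3 := fun x ↦ by
    simpa [hbin x, hp x] using variance_sum_pairEvent_le (ι := Fin n) (μ := μ) x
  refine ⟨fun x ↦ (hvar x).trans ?_, ?_⟩
  · have : 0 ≤ (n : ℝ) * p x := mul_nonneg n.cast_nonneg (hp₀ x)
    nlinarith [pow_nonneg this 2, pow_nonneg this 3]
  have hsum := variance_sum_le_sum_variance_of_covariance_nonpos
    (μ := Measure.pi fun _ : Fin n ↦ μ) (s := univ)
    (X := fun x ω ↦ (binCount n x ω : ℝ) ^ 2 - binCount n x ω)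
    (fun _ _ ↦ MemLp.of_discrete) fun x _ y _ hxy ↦ by
      simpa only [hbin] using covariance_sum_pairEvent_nonpos hxy _
  simp_rw [collEst_eq_sum]
  rw [variance_const_mul]
  calc _ ≤ ((n * (n - 1 : ℝ))⁻¹) ^ 2 * ∑ x, (2 * (n * p x) ^ 2 + 4 * (n * p x) ^ 3) := by
        gcongr
        exact hsum.trans (Finset.sum_le_sum fun x _ ↦ hvar x)
    _ = ((n * (n - 1 : ℝ))⁻¹) ^ 2 * (2 * n ^ 2 * ∑ x, p x ^ 2 + 4 * n ^ 3 * ∑ x, p x ^ 3) := by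
        congr 1
        rw [Finset.mul_sum, Finset.mul_sum, ← Finset.sum_add_distrib]
        exact Finset.sum_congr rfl fun x _ ↦ by ring
    _ ≤ _ := inv_mul_sub_one_sq_mul_le (by exact_mod_cast hn)
        (Finset.sum_nonneg fun x _ ↦ pow_nonneg (hp₀ x) 2)
        (Finset.sum_nonneg fun x _ ↦ pow_nonneg (hp₀ x) 3)
end

section
/- Let a, b > 0 and define g : (0,∞) → ℝ by g(ℓ) = a^ℓ · ℓ^(b−ℓ). Then there is a unique ℓ* > 0 satisfying b − ℓ* + ℓ*·log(a/ℓ*) = 0, and g is strictly increasing on (0, ℓ*] and strictly decreasing on [ℓ*, ∞); in particular g attains its maximum over (0,∞) at ℓ*. -/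
/-!
Taking logarithms, `log g(ℓ) = ℓ log a + (b - ℓ) log ℓ`, whose derivative is
`logSlope a b ℓ = log a - log ℓ + b / ℓ - 1`. This slope is strictly decreasing on `(0, ∞)`,
nonnegative at `min a b` and negative at `max (a eᵇ) 1`, so it has exactly one zero `ℓ*`,
positive before it and negative after it. Finally `ℓ · logSlope a b ℓ = b - ℓ + ℓ log (a / ℓ)`,
so `ℓ*` is also the unique positive root of the critical equation.
-/

open Real Set

section

variable {a b l : ℝ}

noncomputable def logSlope (a b l : ℝ) : ℝ := log a - log l + b / l - 1

lemma logSlope_strictAntiOn (hb : 0 ≤ b) : StrictAntiOn (logSlope a b) (Ioi 0) := by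
  intro x hx y _ hxy
  have hlog : log x < log y := log_lt_log hx hxy
  have hdiv : b / y ≤ b / x := div_le_div_of_nonneg_left hb hx hxy.le
  simp only [logSlope]
  linarith

lemma continuousOn_logSlope : ContinuousOn (logSlope a b) (Ioi 0) := by
  intro x hx
  have hx : x ≠ 0 := (mem_Ioi.mp hx).ne'
  unfold logSlope
  fun_prop (disch := assumption)

lemma mul_logSlope (ha : a ≠ 0) (hl : l ≠ 0) :
    l * logSlope a b l = b - l + l * log (a / l) := by
  rw [logSlope, log_div ha hl]
  field_simp
  ring

lemma logSlope_min_nonneg (ha : 0 < a) (hb : 0 < b) : 0 ≤ logSlope a b (min a b) := by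
  have hpos : 0 < min a b := lt_min ha hb
  have hlog : log (min a b) ≤ log a := log_le_log hpos (min_le_left a b)
  have hdiv : 1 ≤ b / min a b := (one_le_div hpos).2 (min_le_right a b)
  simp only [logSlope]
  linarith

lemma logSlope_max_neg (ha : 0 < a) (hb : 0 < b) : logSlope a b (max (a * exp b) 1) < 0 := by
  have hlog : log a + b ≤ log (max (a * exp b) 1) := by
    have := log_le_log (by positivity) (le_max_left (a * exp b) 1)
    rwa [log_mul ha.ne' (exp_pos b).ne', log_exp] at this
  have hdiv : b / max (a * exp b) 1 ≤ b := div_le_self hb.le (le_max_right _ 1)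
  simp only [logSlope]
  linarith

lemma exists_logSlope_eq_zero (ha : 0 < a) (hb : 0 < b) :
    ∃ c, 0 < c ∧ logSlope a b c = 0 := by
  have hpos : 0 < min a b := lt_min ha hb
  have hle : min a b ≤ max (a * exp b) 1 :=
    (min_le_left a b).trans <| (le_mul_of_one_le_right ha.le (one_le_exp hb.le)).trans
      (le_max_left _ _)
  have hcont : ContinuousOn (logSlope a b) (Icc (min a b) (max (a * exp b) 1)) :=
    continuousOn_logSlope.mono fun x hx => hpos.trans_le hx.1
  obtain ⟨c, hc, hc0⟩ := intermediate_value_Icc' hle hcont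
    ⟨(logSlope_max_neg ha hb).le, logSlope_min_nonneg ha hb⟩
  exact ⟨c, hpos.trans_le hc.1, hc0⟩

lemma hasDerivAt_rpow_mul_rpow (ha : 0 < a) (hl : 0 < l) :
    HasDerivAt (fun l : ℝ => a ^ l * l ^ (b - l)) (a ^ l * l ^ (b - l) * logSlope a b l) l := by
  have hexp : ∀ x, 0 < x → a ^ x * x ^ (b - x) = exp (x * log a + (b - x) * log x) := by
    intro x hx
    rw [rpow_def_of_pos ha, rpow_def_of_pos hx, ← exp_add]
    ring_nf
  have hinner : HasDerivAt (fun x => x * log a + (b - x) * log x) (logSlope a b l) l := by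
    refine (((hasDerivAt_id' l).mul_const (log a)).add
      (((hasDerivAt_const l b).sub (hasDerivAt_id' l)).mul (hasDerivAt_log hl.ne'))).congr_deriv ?_
    simp only [logSlope, Pi.sub_apply]
    field_simp
    ring
  rw [hexp l hl]
  exact hinner.exp.congr_of_eventuallyEq <|
    (eventually_gt_nhds hl).mono fun x hx => hexp x hx

lemma strictMonoOn_rpow_mul_rpow (ha : 0 < a) (hb : 0 ≤ b) {c : ℝ} (hc : logSlope a b c = 0) :
    StrictMonoOn (fun l : ℝ => a ^ l * l ^ (b - l)) (Ioc 0 c) := by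
  apply strictMonoOn_of_deriv_pos (convex_Ioc 0 c)
  · exact fun x hx => (hasDerivAt_rpow_mul_rpow ha hx.1).continuousAt.continuousWithinAt
  · intro x hx
    obtain ⟨hxpos, hxc⟩ : 0 < x ∧ x < c := by rwa [interior_Ioc] at hx
    rw [(hasDerivAt_rpow_mul_rpow ha hxpos).deriv]
    have hslope : 0 < logSlope a b x :=
      hc ▸ logSlope_strictAntiOn hb hxpos (mem_Ioi.mpr (hxpos.trans hxc)) hxc
    exact mul_pos (by positivity) hslope

lemma strictAntiOn_rpow_mul_rpow (ha : 0 < a) (hb : 0 ≤ b) {c : ℝ} (hcpos : 0 < c)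
    (hc : logSlope a b c = 0) :
    StrictAntiOn (fun l : ℝ => a ^ l * l ^ (b - l)) (Ici c) := by
  apply strictAntiOn_of_deriv_neg (convex_Ici c)
  · exact fun x hx =>
      (hasDerivAt_rpow_mul_rpow ha (hcpos.trans_le hx)).continuousAt.continuousWithinAt
  · intro x hx
    rw [interior_Ici] at hx
    have hxpos : 0 < x := hcpos.trans hx
    rw [(hasDerivAt_rpow_mul_rpow ha hxpos).deriv]
    have hslope : logSlope a b x < 0 :=
      hc ▸ logSlope_strictAntiOn hb (mem_Ioi.mpr hcpos) (mem_Ioi.mpr hxpos) hx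
    exact mul_neg_of_pos_of_neg (by positivity) hslope

end

/-- Shape of the auxiliary function `g(ℓ) = a^ℓ · ℓ^(b−ℓ)`: unique critical point,
increasing before it, decreasing after it, and maximal there. -/
theorem aux_function_shape (a b : ℝ) (ha : 0 < a) (hb : 0 < b) :
    ∃ lstar : ℝ, 0 < lstar ∧
      (b - lstar + lstar * Real.log (a / lstar) = 0) ∧
      (∀ l : ℝ, 0 < l → b - l + l * Real.log (a / l) = 0 → l = lstar) ∧
      StrictMonoOn (fun l : ℝ => a ^ l * l ^ (b - l)) (Set.Ioc 0 lstar) ∧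
      StrictAntiOn (fun l : ℝ => a ^ l * l ^ (b - l)) (Set.Ici lstar) ∧
      (∀ l : ℝ, 0 < l → a ^ l * l ^ (b - l) ≤ a ^ lstar * lstar ^ (b - lstar)) := by
  obtain ⟨c, hcpos, hc⟩ := exists_logSlope_eq_zero ha hb
  have hmono := strictMonoOn_rpow_mul_rpow ha hb.le hc
  have hanti := strictAntiOn_rpow_mul_rpow ha hb.le hcpos hc
  refine ⟨c, hcpos, ?_, ?_, hmono, hanti, ?_⟩
  · rw [← mul_logSlope ha.ne' hcpos.ne', hc, mul_zero]
  · intro l hl hroot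
    rw [← mul_logSlope ha.ne' hl.ne'] at hroot
    have hl0 : logSlope a b l = 0 := (mul_eq_zero.mp hroot).resolve_left hl.ne'
    exact (logSlope_strictAntiOn hb.le).injOn hl hcpos (hl0.trans hc.symm)
  · intro l hl
    rcases le_total l c with hlc | hcl
    · exact hmono.monotoneOn ⟨hl, hlc⟩ ⟨hcpos, le_rfl⟩ hlc
    · exact hanti.antitoneOn self_mem_Ici hcl hcl
end

section
/- Let a > 0 and b ≥ 1, and define g(ℓ) = a^ℓ · ℓ^(b−ℓ) for ℓ > 0. Then sup{ g(ℓ) : 1 ≤ ℓ ≤ b } ≤ a · (max(a,b))^(b−1). -/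
open Real Set

theorem Real.rpow_mul_rpow_le_rpow_add {x y M p q : ℝ} (hx : 0 ≤ x) (hy : 0 ≤ y)
    (hxM : x ≤ M) (hyM : y ≤ M) (hp : 0 ≤ p) (hq : 0 ≤ q) :
    x ^ p * y ^ q ≤ M ^ (p + q) := by
  rw [rpow_add_of_nonneg (hx.trans hxM) hp hq]
  exact mul_le_mul (rpow_le_rpow hx hxM hp) (rpow_le_rpow hy hyM hq)
    (rpow_nonneg hy q) (rpow_nonneg (hx.trans hxM) p)

theorem aux_function_sup_general (a b : ℝ) (ha : 0 < a) :
    ∀ l : ℝ, 1 ≤ l → l ≤ b → a ^ l * l ^ (b - l) ≤ a * (max a b) ^ (b - 1) := by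
  intro l hl hlb
  have split_a : a ^ l = a * a ^ (l - 1) := by
    rw [rpow_sub_one ha.ne', mul_div_cancel₀ _ ha.ne']
  calc a ^ l * l ^ (b - l) = a * (a ^ (l - 1) * l ^ (b - l)) := by rw [split_a, mul_assoc]
    _ ≤ a * (max a b) ^ ((l - 1) + (b - l)) := by
        gcongr
        exact rpow_mul_rpow_le_rpow_add ha.le (by linarith) (le_max_left a b)
          (hlb.trans (le_max_right a b)) (by linarith) (by linarith)
    _ = a * (max a b) ^ (b - 1) := by ring_nf

/-- Supremum of the auxiliary function `g(ℓ) = a^ℓ · ℓ^(b−ℓ)` over `[1, b]`. -/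
theorem aux_function_sup (a b : ℝ) (ha : 0 < a) (hb : 1 ≤ b) :
    ∀ l : ℝ, 1 ≤ l → l ≤ b → a ^ l * l ^ (b - l) ≤ a * (max a b) ^ (b - 1) :=
  aux_function_sup_general a b ha
end
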